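/- arXiv:math/9910173 — 8 statements merged into one kernel-verified Lean document; each statement's English description precedes it below -/
import Mathlib

section
/- Let q ∈ ℂ be not a root of unity (q^m ≠ 1 for every positive integer m). Let n ≥ 1 and let C₁₁, C₁₂, C₂₁, C₂₂ be n×n complex matrices satisfying the Dipper–Donkin quantum GL₂ relations, with the quantum determinant C₁₁C₂₂ − C₁₂C₂₁ invertible. If the representation is irreducible, i.e. the only linear subspaces W ⊆ ℂⁿ with C_{ij}W ⊆ W for all i,j ∈ {1,2} are W = 0 and W = ℂⁿ, then n = 1. -/
/-- Every finite-dimensional irreducible algebra representation of the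
Dipper–Donkin quantum `GL₂` with `q` not a root of unity is one dimensional. -/
theorem dipper_donkin_irreducible_dim_one
    (q : ℂ) (hq : ∀ m : ℕ, 0 < m → q ^ m ≠ 1)
    (n : ℕ) (hn : 1 ≤ n)
    (C11 C12 C21 C22 : Matrix (Fin n) (Fin n) ℂ)
    (h1 : C11 * C12 = C12 * C11)
    (h2 : C21 * C11 = q • (C11 * C21))
    (h3 : C22 * C12 = q • (C12 * C22))
    (h4 : C21 * C22 = C22 * C21)
    (h5 : C21 * C12 = q • (C12 * C21))
    (h6 : C22 * C11 - C11 * C22 = (q - 1) • (C12 * C21))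
    (hdet : IsUnit (C11 * C22 - C12 * C21))
    (hirr : ∀ W : Submodule ℂ (Fin n → ℂ),
      (∀ x ∈ W, C11.mulVec x ∈ W) → (∀ x ∈ W, C12.mulVec x ∈ W) →
      (∀ x ∈ W, C21.mulVec x ∈ W) → (∀ x ∈ W, C22.mulVec x ∈ W) →
      W = ⊥ ∨ W = ⊤) :
    n = 1 := by
  have hqn : q ^ n ≠ 1 := hq n hn
  -- if X * Y = q • (Y * X) with X, Y invertible, contradiction with q ^ n ≠ 1
  have key : ∀ X Y : Matrix (Fin n) (Fin n) ℂ,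
      X * Y = q • (Y * X) → IsUnit X → IsUnit Y → False := by
    intro X Y hXY hX hY
    have h := congrArg Matrix.det hXY
    rw [Matrix.det_mul, Matrix.det_smul, Matrix.det_mul, Fintype.card_fin,
      mul_comm Y.det X.det] at h
    have hX0 : X.det ≠ 0 := ((Matrix.isUnit_iff_isUnit_det X).mp hX).ne_zero
    have hY0 : Y.det ≠ 0 := ((Matrix.isUnit_iff_isUnit_det Y).mp hY).ne_zero
    exact hqn (mul_right_cancel₀ (mul_ne_zero hX0 hY0)
      (h.symm.trans (one_mul (X.det * Y.det)).symm))
  -- a matrix killing all vectors is zero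
  have matzero : ∀ X : Matrix (Fin n) (Fin n) ℂ, (∀ v, X.mulVec v = 0) → X = 0 := by
    intro X h
    ext i j
    have := congrFun (h (Pi.single j 1)) i
    simpa using this
  -- a product of invertible matrices decomposes
  have unit_of_mul : ∀ X Y : Matrix (Fin n) (Fin n) ℂ,
      IsUnit (X * Y) → IsUnit X ∧ IsUnit Y := by
    intro X Y h
    rw [Matrix.isUnit_iff_isUnit_det, Matrix.det_mul, isUnit_iff_ne_zero] at h
    constructor <;> rw [Matrix.isUnit_iff_isUnit_det, isUnit_iff_ne_zero]
    · exact left_ne_zero_of_mul h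
    · exact right_ne_zero_of_mul h
  -- C12 is zero or invertible (its range is invariant)
  have hBu : C12 ≠ 0 → IsUnit C12 := by
    intro hB0
    have i1 : ∀ x ∈ LinearMap.range C12.mulVecLin,
        C11.mulVec x ∈ LinearMap.range C12.mulVecLin := by
      rintro x ⟨y, rfl⟩
      refine ⟨C11.mulVec y, ?_⟩
      simp only [Matrix.mulVecLin_apply, Matrix.mulVec_mulVec, h1]
    have i2 : ∀ x ∈ LinearMap.range C12.mulVecLin,
        C12.mulVec x ∈ LinearMap.range C12.mulVecLin := by
      rintro x ⟨y, rfl⟩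
      exact ⟨C12.mulVec y, by simp only [Matrix.mulVecLin_apply, Matrix.mulVec_mulVec]⟩
    have i3 : ∀ x ∈ LinearMap.range C12.mulVecLin,
        C21.mulVec x ∈ LinearMap.range C12.mulVecLin := by
      rintro x ⟨y, rfl⟩
      refine ⟨q • C21.mulVec y, ?_⟩
      simp only [Matrix.mulVecLin_apply, Matrix.mulVec_smul, Matrix.mulVec_mulVec, h5,
        Matrix.smul_mulVec]
    have i4 : ∀ x ∈ LinearMap.range C12.mulVecLin,
        C22.mulVec x ∈ LinearMap.range C12.mulVecLin := by
      rintro x ⟨y, rfl⟩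
      refine ⟨q • C22.mulVec y, ?_⟩
      simp only [Matrix.mulVecLin_apply, Matrix.mulVec_smul, Matrix.mulVec_mulVec, h3,
        Matrix.smul_mulVec]
    rcases hirr _ i1 i2 i3 i4 with h | h
    · exfalso
      apply hB0
      apply matzero
      intro v
      have hm : C12.mulVecLin v ∈ LinearMap.range C12.mulVecLin := LinearMap.mem_range_self _ _
      rw [h] at hm
      simpa [Matrix.mulVecLin_apply] using hm
    · refine Matrix.mulVec_surjective_iff_isUnit.mp ?_
      intro w
      obtain ⟨y, hy⟩ := LinearMap.range_eq_top.mp h w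
      exact ⟨y, by simpa [Matrix.mulVecLin_apply] using hy⟩
  -- C21 is zero or invertible (its kernel is invariant)
  have hCu : C21 ≠ 0 → IsUnit C21 := by
    intro hC0
    have i1 : ∀ x ∈ LinearMap.ker C21.mulVecLin,
        C11.mulVec x ∈ LinearMap.ker C21.mulVecLin := by
      intro x hx
      rw [LinearMap.mem_ker, Matrix.mulVecLin_apply] at hx ⊢
      rw [Matrix.mulVec_mulVec, h2, Matrix.smul_mulVec, ← Matrix.mulVec_mulVec, hx,
        Matrix.mulVec_zero, smul_zero]
    have i2 : ∀ x ∈ LinearMap.ker C21.mulVecLin,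
        C12.mulVec x ∈ LinearMap.ker C21.mulVecLin := by
      intro x hx
      rw [LinearMap.mem_ker, Matrix.mulVecLin_apply] at hx ⊢
      rw [Matrix.mulVec_mulVec, h5, Matrix.smul_mulVec, ← Matrix.mulVec_mulVec, hx,
        Matrix.mulVec_zero, smul_zero]
    have i3 : ∀ x ∈ LinearMap.ker C21.mulVecLin,
        C21.mulVec x ∈ LinearMap.ker C21.mulVecLin := by
      intro x hx
      rw [LinearMap.mem_ker, Matrix.mulVecLin_apply] at hx ⊢
      rw [hx, Matrix.mulVec_zero]
    have i4 : ∀ x ∈ LinearMap.ker C21.mulVecLin,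
        C22.mulVec x ∈ LinearMap.ker C21.mulVecLin := by
      intro x hx
      rw [LinearMap.mem_ker, Matrix.mulVecLin_apply] at hx ⊢
      rw [Matrix.mulVec_mulVec, h4, ← Matrix.mulVec_mulVec, hx, Matrix.mulVec_zero]
    rcases hirr _ i1 i2 i3 i4 with h | h
    · refine Matrix.mulVec_injective_iff_isUnit.mp ?_
      have hinj : Function.Injective C21.mulVecLin := LinearMap.ker_eq_bot.mp h
      intro a b hab
      exact hinj (by simpa [Matrix.mulVecLin_apply] using hab)
    · exfalso
      apply hC0
      apply matzero
      intro v
      have hm : v ∈ LinearMap.ker C21.mulVecLin := h ▸ Submodule.mem_top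
      simpa [Matrix.mulVecLin_apply] using hm
  -- C12 and C21 are both zero
  have hB : C12 = 0 := by
    by_contra hB0
    have hBunit := hBu hB0
    by_cases hC0 : C21 = 0
    · rw [hC0, Matrix.mul_zero, sub_zero] at hdet
      exact key C22 C12 h3 (unit_of_mul _ _ hdet).2 hBunit
    · exact key C21 C12 h5 (hCu hC0) hBunit
  have hC : C21 = 0 := by
    by_contra hC0
    have hCunit := hCu hC0
    rw [hB, Matrix.zero_mul, sub_zero] at hdet
    exact key C21 C11 h2 hCunit (unit_of_mul _ _ hdet).1
  -- now C11 and C22 commute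
  have hcomm : C22 * C11 = C11 * C22 := by
    have h6' := h6
    rw [hB, Matrix.zero_mul, smul_zero, sub_eq_zero] at h6'
    exact h6'
  haveI : Nonempty (Fin n) := ⟨⟨0, hn⟩⟩
  -- C11 acts as a scalar
  obtain ⟨μ, hμ⟩ :=
    Module.End.exists_eigenvalue (Matrix.mulVecLin C11 : Module.End ℂ (Fin n → ℂ))
  have hA : ∀ x : Fin n → ℂ, C11.mulVec x = μ • x := by
    set W := Module.End.eigenspace (Matrix.mulVecLin C11 : Module.End ℂ (Fin n → ℂ)) μ with hW
    have memW : ∀ x : Fin n → ℂ, x ∈ W ↔ C11.mulVec x = μ • x := by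
      intro x
      rw [hW, Module.End.mem_eigenspace_iff, Matrix.mulVecLin_apply]
    have i1 : ∀ x ∈ W, C11.mulVec x ∈ W := by
      intro x hx
      rw [memW] at hx ⊢
      rw [Matrix.mulVec_mulVec, ← Matrix.mulVec_mulVec, hx, Matrix.mulVec_smul, hx]
    have i2 : ∀ x ∈ W, C12.mulVec x ∈ W := by
      intro x hx
      rw [hB, Matrix.zero_mulVec]
      exact Submodule.zero_mem _
    have i3 : ∀ x ∈ W, C21.mulVec x ∈ W := by
      intro x hx
      rw [hC, Matrix.zero_mulVec]
      exact Submodule.zero_mem _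
    have i4 : ∀ x ∈ W, C22.mulVec x ∈ W := by
      intro x hx
      rw [memW] at hx ⊢
      rw [Matrix.mulVec_mulVec, ← hcomm, ← Matrix.mulVec_mulVec, hx, Matrix.mulVec_smul]
    rcases hirr W i1 i2 i3 i4 with h | h
    · exact absurd h (Module.End.hasEigenvalue_iff.mp hμ)
    · intro x
      exact (memW x).mp (h ▸ Submodule.mem_top)
  -- C22 acts as a scalar
  obtain ⟨ν, hν⟩ :=
    Module.End.exists_eigenvalue (Matrix.mulVecLin C22 : Module.End ℂ (Fin n → ℂ))
  have hD : ∀ x : Fin n → ℂ, C22.mulVec x = ν • x := by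
    set W := Module.End.eigenspace (Matrix.mulVecLin C22 : Module.End ℂ (Fin n → ℂ)) ν with hW
    have memW : ∀ x : Fin n → ℂ, x ∈ W ↔ C22.mulVec x = ν • x := by
      intro x
      rw [hW, Module.End.mem_eigenspace_iff, Matrix.mulVecLin_apply]
    have i1 : ∀ x ∈ W, C11.mulVec x ∈ W := by
      intro x hx
      rw [hA x]
      exact Submodule.smul_mem _ _ hx
    have i2 : ∀ x ∈ W, C12.mulVec x ∈ W := by
      intro x hx
      rw [hB, Matrix.zero_mulVec]
      exact Submodule.zero_mem _
    have i3 : ∀ x ∈ W, C21.mulVec x ∈ W := by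
      intro x hx
      rw [hC, Matrix.zero_mulVec]
      exact Submodule.zero_mem _
    have i4 : ∀ x ∈ W, C22.mulVec x ∈ W := by
      intro x hx
      rw [memW] at hx ⊢
      rw [Matrix.mulVec_mulVec, ← Matrix.mulVec_mulVec, hx, Matrix.mulVec_smul, hx]
    rcases hirr W i1 i2 i3 i4 with h | h
    · exact absurd h (Module.End.hasEigenvalue_iff.mp hν)
    · intro x
      exact (memW x).mp (h ▸ Submodule.mem_top)
  -- the span of a single vector is invariant, hence all of the space; so n = 1
  set v : Fin n → ℂ := Pi.single ⟨0, hn⟩ 1 with hv_def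
  have hv : v ≠ 0 := by
    intro h
    have := congrFun h ⟨0, hn⟩
    simp [hv_def] at this
  have i1 : ∀ x ∈ (ℂ ∙ v), C11.mulVec x ∈ (ℂ ∙ v) := by
    intro x hx
    rw [hA x]
    exact Submodule.smul_mem _ _ hx
  have i2 : ∀ x ∈ (ℂ ∙ v), C12.mulVec x ∈ (ℂ ∙ v) := by
    intro x hx
    rw [hB, Matrix.zero_mulVec]
    exact Submodule.zero_mem _
  have i3 : ∀ x ∈ (ℂ ∙ v), C21.mulVec x ∈ (ℂ ∙ v) := by
    intro x hx
    rw [hC, Matrix.zero_mulVec]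
    exact Submodule.zero_mem _
  have i4 : ∀ x ∈ (ℂ ∙ v), C22.mulVec x ∈ (ℂ ∙ v) := by
    intro x hx
    rw [hD x]
    exact Submodule.smul_mem _ _ hx
  have hWtop : (ℂ ∙ v) = (⊤ : Submodule ℂ (Fin n → ℂ)) := by
    rcases hirr _ i1 i2 i3 i4 with h | h
    · exfalso
      have hmem : v ∈ (ℂ ∙ v) := Submodule.mem_span_singleton_self v
      rw [h] at hmem
      exact hv (by simpa using hmem)
    · exact h
  have h1' : Module.finrank ℂ ↥(ℂ ∙ v) = 1 := finrank_span_singleton hv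
  rw [hWtop, finrank_top, Module.finrank_fin_fun] at h1'
  exact h1'
end

section
/- Let q ∈ ℂ be not a root of unity (q^m ≠ 1 for every positive integer m). Let n ≥ 1 and let C₁₁, C₁₂, C₂₁, C₂₂ be n×n complex matrices satisfying the Dipper–Donkin quantum GL₂ relations, with the quantum determinant C₁₁C₂₂ − C₁₂C₂₁ invertible. Then C₁₁ and C₂₂ are invertible matrices, while C₁₂ and C₂₁ are nilpotent matrices. -/
/-!
The quantum determinant `D = C₁₁ C₂₂ - C₁₂ C₂₁` `q`-commutes with the off-diagonal generators:
`D C₁₂ D⁻¹ = q C₁₂` and `D⁻¹ C₂₁ D = q C₂₁`. Hence the nonzero eigenvalues of `C₁₂` form a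
finite set stable under `μ ↦ q μ`; comparing the products of its elements gives `q ^ k = 1` for
its size `k`, so the set is empty and `C₁₂` is nilpotent, and likewise `C₂₁`. Because
`C₂₁ C₁₂ = q C₁₂ C₂₁`, the product `C₁₂ C₂₁` is nilpotent as well, and it commutes with `D`;
so `C₁₁ C₂₂ = D + C₁₂ C₂₁` is invertible, and with it both of its square factors.
-/

open Polynomial

theorem Finset.eq_empty_of_forall_mul_mem {M : Type*} [CommMonoidWithZero M]
    [IsCancelMulZero M] {q : M} (hq : ∀ m : ℕ, 0 < m → q ^ m ≠ 1) {S : Finset M}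
    (hS0 : 0 ∉ S) (hS : ∀ μ ∈ S, q * μ ∈ S) : S = ∅ := by
  classical
  have : Nontrivial M := nontrivial_of_ne q 1 (by simpa using hq 1 one_pos)
  by_contra hne
  obtain ⟨μ, hμ⟩ := Finset.nonempty_iff_ne_empty.mpr hne
  have hq0 : q ≠ 0 := by
    rintro rfl
    exact hS0 (by simpa using hS μ hμ)
  have hinj : Function.Injective (q * ·) := mul_right_injective₀ hq0
  have himage : S.image (q * ·) = S :=
    Finset.eq_of_subset_of_card_le (Finset.image_subset_iff.mpr hS)
      (Finset.card_image_of_injective S hinj).ge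
  have hprod : q ^ S.card * ∏ μ ∈ S, μ = 1 * ∏ μ ∈ S, μ := by
    conv_rhs => rw [one_mul, ← himage, Finset.prod_image fun x _ y _ h => hinj h]
    rw [Finset.prod_mul_distrib, Finset.prod_const]
  have hS_ne : ∏ μ ∈ S, μ ≠ 0 := Finset.prod_ne_zero_iff.mpr fun x hx h => hS0 (h ▸ hx)
  exact hq S.card (Finset.card_pos.mpr ⟨μ, hμ⟩) (mul_right_cancel₀ hS_ne hprod)

namespace Matrix

variable {ι K : Type*} [Fintype ι] [DecidableEq ι] [Field K]

theorem eval_charpoly_mul_of_semiconjBy {q : K} {B : Matrix ι ι K} (u : (Matrix ι ι K)ˣ)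
    (h : SemiconjBy (u : Matrix ι ι K) B (q • B)) (μ : K) :
    B.charpoly.eval (q * μ) = q ^ Fintype.card ι * B.charpoly.eval μ := by
  have hB : B = u.val⁻¹ * (q • B) * u.val := by
    rw [← coe_units_inv, mul_assoc, ← h.eq, ← mul_assoc, Units.inv_mul, one_mul]
  have hscalar : scalar ι (q * μ) = q • scalar ι μ := by
    ext i j
    simp [diagonal_apply]
  conv_lhs => rw [hB, charpoly_units_conj', eval_charpoly, hscalar, ← smul_sub, det_smul]
  rw [eval_charpoly]

theorem isNilpotent_of_forall_isRoot_charpoly [IsAlgClosed K] {B : Matrix ι ι K}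
    (h : ∀ μ, B.charpoly.IsRoot μ → μ = 0) : IsNilpotent B := by
  have hroots : B.charpoly.roots = Multiset.replicate (Fintype.card ι) 0 := by
    refine Multiset.eq_replicate.mpr ⟨?_, fun μ hμ => h μ (isRoot_of_mem_roots hμ)⟩
    rw [← (IsAlgClosed.splits B.charpoly).natDegree_eq_card_roots, charpoly_natDegree_eq_dim]
  have hX : B.charpoly = X ^ Fintype.card ι := by
    rw [(IsAlgClosed.splits B.charpoly).eq_prod_roots_of_monic B.charpoly_monic, hroots]
    simp
  exact ⟨Fintype.card ι, by simpa [hX] using aeval_self_charpoly B⟩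

theorem isNilpotent_of_semiconjBy_smul [IsAlgClosed K] {q : K}
    (hq : ∀ m : ℕ, 0 < m → q ^ m ≠ 1) {B : Matrix ι ι K} (u : (Matrix ι ι K)ˣ)
    (h : SemiconjBy (u : Matrix ι ι K) B (q • B)) : IsNilpotent B := by
  classical
  rcases eq_or_ne q 0 with rfl | hq0
  · have hB : B = 0 := by simpa using h.eq
    exact hB ▸ IsNilpotent.zero
  set S := B.charpoly.roots.toFinset.erase 0
  have hS : S = ∅ := by
    refine Finset.eq_empty_of_forall_mul_mem hq (Finset.notMem_erase 0 _) fun μ hμ => ?_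
    simp only [S, Finset.mem_erase, Multiset.mem_toFinset, mem_roots B.charpoly_monic.ne_zero,
      IsRoot.def] at hμ ⊢
    exact ⟨mul_ne_zero hq0 hμ.1, by rw [eval_charpoly_mul_of_semiconjBy u h, hμ.2, mul_zero]⟩
  refine isNilpotent_of_forall_isRoot_charpoly fun μ hμ => ?_
  by_contra hμ0
  have hμS : μ ∈ S := by simpa [S, hμ0, B.charpoly_monic.ne_zero] using hμ
  simp [hS] at hμS

end Matrix

section QuantumMatrix

variable {R A : Type*} [CommSemiring R] [Ring A] [Algebra R A] {q : R} {a b c d : A}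

/-- `a b c d` play the roles of `C₁₁ C₁₂ C₂₁ C₂₂`. -/
def quantumDet (a b c d : A) : A := a * d - b * c

theorem semiconjBy_quantumDet_upperRight (hab : a * b = b * a) (hdb : d * b = q • (b * d))
    (hcb : c * b = q • (b * c)) : SemiconjBy (quantumDet a b c d) b (q • b) := by
  have had : a * d * b = q • (b * (a * d)) := by
    rw [mul_assoc, hdb, mul_smul_comm, ← mul_assoc, hab, mul_assoc]
  have hbc : b * c * b = q • (b * (b * c)) := by
    rw [mul_assoc, hcb, mul_smul_comm]
  rw [SemiconjBy, quantumDet, sub_mul, had, hbc, ← smul_sub, ← mul_sub, smul_mul_assoc]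

theorem semiconjBy_quantumDet_lowerLeft (hca : c * a = q • (a * c)) (hcd : c * d = d * c)
    (hcb : c * b = q • (b * c)) : SemiconjBy (quantumDet a b c d) (q • c) c := by
  have had : c * (a * d) = q • (a * d * c) := by
    rw [← mul_assoc, hca, smul_mul_assoc, mul_assoc, hcd, ← mul_assoc]
  have hbc : c * (b * c) = q • (b * c * c) := by
    rw [← mul_assoc, hcb, smul_mul_assoc]
  rw [SemiconjBy, quantumDet, mul_smul_comm, mul_sub c, had, hbc, ← smul_sub, ← sub_mul]

theorem pow_mul_eq_smul_mul_pow (h : c * b = q • (b * c)) (k : ℕ) :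
    c ^ k * b = q ^ k • (b * c ^ k) := by
  induction k with
  | zero => simp
  | succ k ih =>
    rw [pow_succ, mul_assoc, h, mul_smul_comm, ← mul_assoc, ih, smul_mul_assoc, smul_smul,
      mul_assoc, ← pow_succ, ← pow_succ']

theorem exists_mul_pow_eq_smul (h : c * b = q • (b * c)) (k : ℕ) :
    ∃ r : R, (b * c) ^ k = r • (b ^ k * c ^ k) := by
  induction k with
  | zero => exact ⟨1, by simp⟩
  | succ k ih =>
    obtain ⟨r, hr⟩ := ih
    refine ⟨r * q ^ k, ?_⟩
    rw [pow_succ, hr, smul_mul_assoc, mul_assoc, ← mul_assoc (c ^ k),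
      pow_mul_eq_smul_mul_pow h, smul_mul_assoc, mul_smul_comm, smul_smul, pow_succ, pow_succ, mul_assoc, mul_assoc]

theorem IsNilpotent.mul_right_of_mul_eq_smul (hb : IsNilpotent b) (h : c * b = q • (b * c)) :
    IsNilpotent (b * c) := by
  obtain ⟨k, hk⟩ := hb
  obtain ⟨r, hr⟩ := exists_mul_pow_eq_smul h k
  exact ⟨k, by rw [hr, hk, zero_mul, smul_zero]⟩

theorem commute_mul_of_semiconjBy_smul {x : A} (hb : SemiconjBy x b (q • b))
    (hc : SemiconjBy x (q • c) c) : Commute (b * c) x := by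
  rw [Commute, SemiconjBy, mul_assoc, ← hc.eq, ← mul_assoc, ← mul_assoc, hb.eq, smul_mul_assoc,
    mul_smul_comm, smul_mul_assoc, mul_assoc]

theorem isUnit_mul_of_isUnit_quantumDet (hab : a * b = b * a) (hca : c * a = q • (a * c))
    (hdb : d * b = q • (b * d)) (hcd : c * d = d * c) (hcb : c * b = q • (b * c))
    (hb : IsNilpotent b) (hdet : IsUnit (quantumDet a b c d)) : IsUnit (a * d) := by
  have had : a * d = quantumDet a b c d + b * c := (sub_add_cancel _ _).symm
  rw [had]
  exact (hb.mul_right_of_mul_eq_smul hcb).isUnit_add_left_of_commute hdet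
    (commute_mul_of_semiconjBy_smul (semiconjBy_quantumDet_upperRight hab hdb hcb)
      (semiconjBy_quantumDet_lowerLeft hca hcd hcb))

end QuantumMatrix

theorem dipper_donkin_diag_invertible_offdiag_nilpotent_general
    (q : ℂ) (hq : ∀ m : ℕ, 0 < m → q ^ m ≠ 1)
    (n : ℕ)
    (C11 C12 C21 C22 : Matrix (Fin n) (Fin n) ℂ)
    (h1 : C11 * C12 = C12 * C11)
    (h2 : C21 * C11 = q • (C11 * C21))
    (h3 : C22 * C12 = q • (C12 * C22))
    (h4 : C21 * C22 = C22 * C21)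
    (h5 : C21 * C12 = q • (C12 * C21))
    (hdet : IsUnit (C11 * C22 - C12 * C21)) :
    IsUnit C11 ∧ IsUnit C22 ∧ IsNilpotent C12 ∧ IsNilpotent C21 := by
  obtain ⟨u, hu⟩ := hdet
  have h12 : SemiconjBy (u : Matrix (Fin n) (Fin n) ℂ) C12 (q • C12) :=
    hu ▸ semiconjBy_quantumDet_upperRight h1 h3 h5
  have h21 : SemiconjBy (u : Matrix (Fin n) (Fin n) ℂ) (q • C21) C21 :=
    hu ▸ semiconjBy_quantumDet_lowerLeft h2 h4 h5
  have hC12 : IsNilpotent C12 := Matrix.isNilpotent_of_semiconjBy_smul hq u h12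
  have hC21 : IsNilpotent C21 :=
    Matrix.isNilpotent_of_semiconjBy_smul hq u⁻¹ h21.units_inv_symm_left
  have hdiag : IsUnit (C11 * C22) :=
    isUnit_mul_of_isUnit_quantumDet h1 h2 h3 h4 h5 hC12 ⟨u, hu⟩
  exact ⟨isUnit_of_mul_isUnit_left hdiag, isUnit_of_mul_isUnit_right hdiag, hC12, hC21⟩

/-- For any finite-dimensional representation of the Dipper–Donkin quantum `GL₂`
with `q` not a root of unity, the diagonal generators act invertibly and the
off-diagonal generators act nilpotently. -/
theorem dipper_donkin_diag_invertible_offdiag_nilpotent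
    (q : ℂ) (hq : ∀ m : ℕ, 0 < m → q ^ m ≠ 1)
    (n : ℕ) (hn : 1 ≤ n)
    (C11 C12 C21 C22 : Matrix (Fin n) (Fin n) ℂ)
    (h1 : C11 * C12 = C12 * C11)
    (h2 : C21 * C11 = q • (C11 * C21))
    (h3 : C22 * C12 = q • (C12 * C22))
    (h4 : C21 * C22 = C22 * C21)
    (h5 : C21 * C12 = q • (C12 * C21))
    (h6 : C22 * C11 - C11 * C22 = (q - 1) • (C12 * C21))
    (hdet : IsUnit (C11 * C22 - C12 * C21)) :
    IsUnit C11 ∧ IsUnit C22 ∧ IsNilpotent C12 ∧ IsNilpotent C21 :=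
  dipper_donkin_diag_invertible_offdiag_nilpotent_general q hq n C11 C12 C21 C22 h1 h2 h3 h4 h5 hdet
end

section
/- Let q ∈ ℂ, let n ≥ 1 and let C₁₁, C₁₂, C₂₁, C₂₂ be n×n complex matrices satisfying the Dipper–Donkin quantum GL₂ relations. If the representation is irreducible, i.e. the only linear subspaces W ⊆ ℂⁿ with C_{ij}W ⊆ W for all i,j ∈ {1,2} are W = 0 and W = ℂⁿ, then C₁₂ is either the zero matrix or an invertible matrix, and likewise C₂₁ is either zero or invertible. -/
/-- In an irreducible representation of the Dipper–Donkin quantum `GL₂`, each of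
the off-diagonal generators acts either as zero or as an invertible matrix. -/
theorem dipper_donkin_irreducible_offdiag_zero_or_invertible
    (q : ℂ) (n : ℕ) (hn : 1 ≤ n)
    (C11 C12 C21 C22 : Matrix (Fin n) (Fin n) ℂ)
    (h1 : C11 * C12 = C12 * C11)
    (h2 : C21 * C11 = q • (C11 * C21))
    (h3 : C22 * C12 = q • (C12 * C22))
    (h4 : C21 * C22 = C22 * C21)
    (h5 : C21 * C12 = q • (C12 * C21))
    (h6 : C22 * C11 - C11 * C22 = (q - 1) • (C12 * C21))
    (hirr : ∀ W : Submodule ℂ (Fin n → ℂ),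
      (∀ x ∈ W, C11.mulVec x ∈ W) → (∀ x ∈ W, C12.mulVec x ∈ W) →
      (∀ x ∈ W, C21.mulVec x ∈ W) → (∀ x ∈ W, C22.mulVec x ∈ W) →
      W = ⊥ ∨ W = ⊤) :
    (C12 = 0 ∨ IsUnit C12) ∧ (C21 = 0 ∨ IsUnit C21) := by
  constructor
  · -- use the range of C12
    have key := hirr (LinearMap.range C12.mulVecLin) ?_ ?_ ?_ ?_
    · rcases key with hbot | htop
      · left
        ext i j
        have : C12.mulVec (Pi.single j 1) ∈ (⊥ : Submodule ℂ (Fin n → ℂ)) := by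
          rw [← hbot]; exact ⟨Pi.single j 1, rfl⟩
        have := congr_fun (Submodule.mem_bot ℂ |>.mp this) i
        simpa [Matrix.mulVec_single] using this
      · right
        rw [← Matrix.mulVec_surjective_iff_isUnit]
        intro y
        have : y ∈ LinearMap.range C12.mulVecLin := htop ▸ Submodule.mem_top
        obtain ⟨x, hx⟩ := this
        exact ⟨x, hx⟩
    · rintro x ⟨y, rfl⟩
      refine ⟨C11.mulVec y, ?_⟩
      simp only [Matrix.mulVecLin_apply]
      rw [Matrix.mulVec_mulVec, Matrix.mulVec_mulVec, h1]
    · rintro x ⟨y, rfl⟩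
      exact ⟨C12.mulVec y, rfl⟩
    · rintro x ⟨y, rfl⟩
      refine ⟨q • C21.mulVec y, ?_⟩
      simp only [Matrix.mulVecLin_apply]
      rw [Matrix.mulVec_smul, Matrix.mulVec_mulVec, Matrix.mulVec_mulVec, h5,
        Matrix.smul_mulVec]
    · rintro x ⟨y, rfl⟩
      refine ⟨q • C22.mulVec y, ?_⟩
      simp only [Matrix.mulVecLin_apply]
      rw [Matrix.mulVec_smul, Matrix.mulVec_mulVec, Matrix.mulVec_mulVec, h3,
        Matrix.smul_mulVec]
  · -- use the kernel of C21
    have key := hirr (LinearMap.ker C21.mulVecLin) ?_ ?_ ?_ ?_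
    · rcases key with hbot | htop
      · right
        rw [← Matrix.mulVec_injective_iff_isUnit]
        have : Function.Injective C21.mulVecLin := by
          rw [← LinearMap.ker_eq_bot]; exact hbot
        exact this
      · left
        ext i j
        have : C21.mulVec (Pi.single j 1) = 0 := by
          have : (Pi.single j 1 : Fin n → ℂ) ∈ LinearMap.ker C21.mulVecLin := by
            rw [htop]; trivial
          simpa using this
        have := congr_fun this i
        simpa [Matrix.mulVec_single] using this
    · intro x hx
      simp only [LinearMap.mem_ker, Matrix.mulVecLin_apply] at hx ⊢
      rw [Matrix.mulVec_mulVec, h2, Matrix.smul_mulVec,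
        ← Matrix.mulVec_mulVec, hx, Matrix.mulVec_zero, smul_zero]
    · intro x hx
      simp only [LinearMap.mem_ker, Matrix.mulVecLin_apply] at hx ⊢
      rw [Matrix.mulVec_mulVec, h5, Matrix.smul_mulVec,
        ← Matrix.mulVec_mulVec, hx, Matrix.mulVec_zero, smul_zero]
    · intro x hx
      simp only [LinearMap.mem_ker, Matrix.mulVecLin_apply] at hx ⊢
      rw [Matrix.mulVec_mulVec, ← Matrix.mulVec_mulVec, hx, Matrix.mulVec_zero]
    · intro x hx
      simp only [LinearMap.mem_ker, Matrix.mulVecLin_apply] at hx ⊢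
      rw [Matrix.mulVec_mulVec, h4, ← Matrix.mulVec_mulVec, hx, Matrix.mulVec_zero]
end

section
/- Let q ∈ ℂ with q^m ≠ 1 for every positive integer m. Then there do not exist n ≥ 1 and n×n complex matrices C, D, E such that E is invertible, C is nilpotent, CD − DC = E, and EC = qCE. Equivalently, if CD − DC = E with E invertible and EC = qCE for such q, then C is not nilpotent. -/
/-- If `q` is not a root of unity, there is no pair of square complex matrices
`C`, `D` with `C` nilpotent whose commutator `E = CD − DC` is invertible and
satisfies `EC = qCE`. -/
theorem no_nilpotent_with_invertible_qcommutator
    (q : ℂ) (hq : ∀ m : ℕ, 0 < m → q ^ m ≠ 1) :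
    ¬ ∃ (n : ℕ) (_ : 1 ≤ n) (C D E : Matrix (Fin n) (Fin n) ℂ),
        IsUnit E ∧ IsNilpotent C ∧ C * D - D * C = E ∧ E * C = q • (C * E) := by
  rintro ⟨n, hn, C, D, E, hE, ⟨m, hm⟩, hcomm, hqc⟩
  haveI : NeZero n := ⟨by omega⟩
  -- E * C^k = q^k • (C^k * E)
  have hEC : ∀ k : ℕ, E * C ^ k = q ^ k • (C ^ k * E) := by
    intro k
    induction k with
    | zero => simp
    | succ k ih =>
      rw [pow_succ, ← mul_assoc, ih, smul_mul_assoc, mul_assoc, hqc,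
        mul_smul_comm, smul_smul, pow_succ, ← mul_assoc]
  -- key identity
  have hkey : ∀ k : ℕ, C ^ (k + 1) * D - D * C ^ (k + 1) =
      (∑ i ∈ Finset.range (k + 1), q ^ i) • (C ^ k * E) := by
    intro k
    induction k with
    | zero => simpa using hcomm
    | succ k ih =>
      have expand : C ^ (k + 2) * D - D * C ^ (k + 2) =
          C * (C ^ (k + 1) * D - D * C ^ (k + 1)) + (C * D - D * C) * C ^ (k + 1) := by
        simp only [pow_succ']
        noncomm_ring
      rw [expand, ih, hcomm, hEC (k + 1), mul_smul_comm, ← mul_assoc, ← pow_succ']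
      simp [Finset.sum_range_succ, add_smul]
  -- minimal k with C^k = 0
  have hex : ∃ k, C ^ k = 0 := ⟨m, hm⟩
  have hk0 : C ^ Nat.find hex = 0 := Nat.find_spec hex
  have hkpos : 0 < Nat.find hex := by
    rcases Nat.eq_zero_or_pos (Nat.find hex) with h | h
    · exfalso; rw [h, pow_zero] at hk0; exact one_ne_zero hk0
    · exact h
  obtain ⟨j, hkj⟩ : ∃ j, Nat.find hex = j + 1 := ⟨Nat.find hex - 1, by omega⟩
  rw [hkj] at hk0
  have hj : C ^ j ≠ 0 := Nat.find_min hex (by omega)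
  have h0 : (0 : Matrix (Fin n) (Fin n) ℂ) =
      (∑ i ∈ Finset.range (j + 1), q ^ i) • (C ^ j * E) := by
    rw [← hkey j, hk0]; simp
  have hS : (∑ i ∈ Finset.range (j + 1), q ^ i) ≠ 0 := by
    have hq1 : q ≠ 1 := by
      intro h; exact hq 1 one_pos (by simp [h])
    rw [geom_sum_eq hq1]
    have : q ^ (j + 1) ≠ 1 := hq (j + 1) (by omega)
    intro h
    apply this
    have := div_eq_zero_iff.mp h
    rcases this with h' | h'
    · linear_combination h'
    · exact absurd (by linear_combination h') hq1
  have hCE : C ^ j * E = 0 := by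
    have := h0.symm
    rwa [smul_eq_zero, or_iff_right hS] at this
  exact hj ((hE.mul_left_eq_zero).mp hCE)
end

section
/- Let q ∈ ℂ with q^m ≠ 1 for every positive integer m, let n ≥ 1, and let A, B be n×n complex matrices with A invertible and AB = qBA. Then B is nilpotent. -/
/-!
Conjugation by `A` carries `B` to `q • B`, so the minimal polynomial `p` of `B` also annihilates
`q • B`, i.e. `p ∣ p.comp (C q * X)`. Both have degree `d = deg p`, hence
`p.comp (C q * X) = q ^ d • p`, and comparing coefficients gives `p_k q ^ k = q ^ d p_k`.
For `q ≠ 0` not a root of unity the powers of `q` are pairwise distinct, so `p = X ^ d` and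
`B ^ d = 0`; for `q = 0` already `A * B = 0` forces `B = 0`.
-/

open Polynomial

theorem SemiconjBy.aeval {R A : Type*} [CommSemiring R] [Semiring A] [Algebra R A] {a x y : A}
    (h : SemiconjBy a x y) (p : R[X]) : SemiconjBy a (aeval x p) (aeval y p) := by
  induction p using Polynomial.induction_on' with
  | add p r hp hr => simpa only [map_add] using hp.add_right hr
  | monomial n c =>
    simpa only [aeval_monomial] using
      SemiconjBy.mul_right (Algebra.commute_algebraMap_right c a) (h.pow_right n)

theorem injective_pow_of_ne_zero_of_not_isOfFinOrder {G₀ : Type*} [GroupWithZero G₀] {q : G₀}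
    (hq0 : q ≠ 0) (hq : ¬IsOfFinOrder q) : Function.Injective (q ^ · : ℕ → G₀) := by
  have hu : ¬IsOfFinOrder (Units.mk0 q hq0) := by
    simpa [isOfFinOrder_iff_pow_eq_one, Units.ext_iff] using hq
  exact Units.val_injective.comp (injective_pow_iff_not_isOfFinOrder.mpr hu)

theorem Polynomial.Monic.eq_X_pow_of_dvd_comp_C_mul_X {K : Type*} [Field K] {p : K[X]} {q : K}
    (hp : p.Monic) (hq : Function.Injective (q ^ · : ℕ → K)) (hdvd : p ∣ p.comp (C q * X)) :
    p = X ^ p.natDegree := by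
  have hdeg : (p.comp (C q * X)).natDegree ≤ p.natDegree := by
    simpa using natDegree_comp_le.trans
      (Nat.mul_le_mul_left p.natDegree ((natDegree_C_mul_le q X).trans natDegree_X_le))
  set c := (p.comp (C q * X)).leadingCoeff
  have hcoeff (k : ℕ) : p.coeff k * q ^ k = c * p.coeff k := by
    rw [← comp_C_mul_X_coeff, eq_leadingCoeff_mul_of_monic_of_dvd_of_natDegree_le hp hdvd hdeg,
      coeff_C_mul]
  have hc : c = q ^ p.natDegree := by simpa [hp.coeff_natDegree] using (hcoeff p.natDegree).symm
  ext k
  rw [coeff_X_pow]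
  split_ifs with hk
  · rw [hk, hp.coeff_natDegree]
  · by_contra h0
    refine hq.ne hk (mul_left_cancel₀ h0 ?_)
    rw [← hc]
    linear_combination hcoeff k

section

variable {K S : Type*} [Field K] [Ring S] [Algebra K S] {a b : S} {q : K}

theorem minpoly_dvd_comp_C_mul_X_of_mul_eq_smul_mul (ha : IsUnit a) (h : a * b = q • (b * a)) :
    minpoly K b ∣ (minpoly K b).comp (C q * X) := by
  have hconj : SemiconjBy a b (q • b) := by rw [SemiconjBy, h, smul_mul_assoc]
  have hqb : aeval (q • b) (minpoly K b) * a = 0 := by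
    rw [← (hconj.aeval _).eq, minpoly.aeval, mul_zero]
  apply minpoly.dvd
  rwa [aeval_comp, map_mul, aeval_C, aeval_X, ← Algebra.smul_def, ← ha.mul_left_eq_zero]

theorem isNilpotent_of_mul_eq_smul_mul (hb : IsIntegral K b) (ha : IsUnit a)
    (hq : ¬IsOfFinOrder q) (h : a * b = q • (b * a)) : IsNilpotent b := by
  rcases eq_or_ne q 0 with rfl | hq0
  · rw [zero_smul, ha.mul_right_eq_zero] at h
    exact h ▸ IsNilpotent.zero
  have hX : minpoly K b = X ^ (minpoly K b).natDegree :=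
    (minpoly.monic hb).eq_X_pow_of_dvd_comp_C_mul_X
      (injective_pow_of_ne_zero_of_not_isOfFinOrder hq0 hq)
      (minpoly_dvd_comp_C_mul_X_of_mul_eq_smul_mul ha h)
  refine ⟨(minpoly K b).natDegree, ?_⟩
  have hb0 := minpoly.aeval K b
  rwa [hX, map_pow, aeval_X] at hb0

end

theorem qspinor_invertible_implies_nilpotent_general
    (q : ℂ) (hq : ∀ m : ℕ, 0 < m → q ^ m ≠ 1)
    (n : ℕ)
    (A B : Matrix (Fin n) (Fin n) ℂ)
    (hA : IsUnit A)
    (hAB : A * B = q • (B * A)) :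
    IsNilpotent B :=
  isNilpotent_of_mul_eq_smul_mul (Algebra.IsIntegral.isIntegral B) hA
    (by simpa [isOfFinOrder_iff_pow_eq_one] using hq) hAB

/-- In a representation of the `q`-spinor `AB = qBA` with `q` not a root of
unity, if `A` is invertible then `B` is nilpotent. -/
theorem qspinor_invertible_implies_nilpotent
    (q : ℂ) (hq : ∀ m : ℕ, 0 < m → q ^ m ≠ 1)
    (n : ℕ) (hn : 1 ≤ n)
    (A B : Matrix (Fin n) (Fin n) ℂ)
    (hA : IsUnit A)
    (hAB : A * B = q • (B * A)) :
    IsNilpotent B :=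
  qspinor_invertible_implies_nilpotent_general q hq n A B hA hAB
end

section
/- Let q ∈ ℂ with q ≠ 0 and q² ≠ 1, and let ε ∈ {q, q⁻¹}. Let A be the 4×4 complex block-diagonal matrix A = diag(a, b) where a is the 2×2 Jordan block with eigenvalue ε (a = εI + e₁₂ in 2×2) and b is the 2×2 Jordan block with eigenvalue 1. Suppose B and B' are 4×4 complex matrices with AB = qBA, B'A = qAB', and BB' = qB'B. Then BB' = 0. -/
/-!
Rewrite the relations as `B A = q⁻¹ (A B)` and `B' A = q (A B')`. If `X A = c (A X)` and
`v₀, v₁` is a left Jordan chain of `A` for `μ`, then `v₁ X` is a left eigenvector of `A` for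
`c μ`, and so is `v₀ X` once `v₁ X = 0`; as `A` is triangular with diagonal `ε, ε, 1, 1`, both
vanish unless `c μ ∈ {ε, 1}`. Because `q ≠ 0` and `q² ≠ 1`, this kills the rows of `B` in one
Jordan block and the rows of `B'` in the other, so each row of `B B' = q (B' B)` vanishes.
-/

open Matrix

namespace Matrix

variable {n R K : Type*} [Fintype n]

theorem exists_diag_eq_of_vecMul_eq_smul [DecidableEq n] [LinearOrder n] [Field K]
    {A : Matrix n n K} (hA : A.IsUpperTriangular) {ν : K} {w : n → K} (hw : w ≠ 0)
    (h : w ᵥ* A = ν • w) : ∃ i, A i i = ν := by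
  have hdet : (A - diagonal fun _ ↦ ν).det = 0 :=
    exists_vecMul_eq_zero_iff.mp ⟨w, hw, by ext; simp [vecMul_sub, h]⟩
  rw [det_of_isUpperTriangular (hA.sub (blockTriangular_diagonal _))] at hdet
  obtain ⟨i, -, hi⟩ := Finset.prod_eq_zero_iff.mp hdet
  exact ⟨i, by simpa [sub_eq_zero] using hi⟩

def IsLeftJordanPair [CommSemiring R] (A : Matrix n n R) (μ : R) (v₀ v₁ : n → R) : Prop :=
  v₁ ᵥ* A = μ • v₁ ∧ v₀ ᵥ* A = μ • v₀ + v₁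

theorem vecMul_eq_zero_of_mul_eq_smul_mul [CommSemiring R] {A X : Matrix n n R} {c μ : R}
    (hX : X * A = c • (A * X)) (hA : ∀ w, w ᵥ* A = (c * μ) • w → w = 0)
    {u v : n → R} (hu : u ᵥ* X = 0) (hv : v ᵥ* A = μ • v + u) : v ᵥ* X = 0 :=
  hA _ <| by
    rw [vecMul_vecMul, hX, vecMul_smul, ← vecMul_vecMul, hv, add_vecMul, hu, add_zero,
      smul_vecMul, smul_smul]

theorem IsLeftJordanPair.vecMul_eq_zero [CommSemiring R] {A X : Matrix n n R} {c μ : R}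
    {v₀ v₁ : n → R} (hv : IsLeftJordanPair A μ v₀ v₁) (hX : X * A = c • (A * X))
    (hA : ∀ w, w ᵥ* A = (c * μ) • w → w = 0) : v₀ ᵥ* X = 0 ∧ v₁ ᵥ* X = 0 := by
  have h₁ := vecMul_eq_zero_of_mul_eq_smul_mul hX hA (zero_vecMul X) (by rw [hv.1, add_zero])
  exact ⟨vecMul_eq_zero_of_mul_eq_smul_mul hX hA h₁ hv.2, h₁⟩

theorem mul_eq_zero_of_rows_eq_zero [Semiring R] {X Y : Matrix n n R} {c : R} (p : n → Prop)
    (hX : ∀ i, p i → X i = 0) (hY : ∀ i, ¬p i → Y i = 0) (hXY : X * Y = c • (Y * X)) :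
    X * Y = 0 := by
  ext i j
  by_cases hi : p i
  · simp [mul_apply, hX i hi]
  · rw [hXY]
    simp [mul_apply, hY i hi]

end Matrix

section TwoJordanBlocks

variable {K : Type*} [Field K]

def twoJordanBlocks (ε : K) : Matrix (Fin 4) (Fin 4) K :=
  diagonal ![ε, ε, 1, 1] + single 0 1 1 + single 2 3 1

theorem twoJordanBlocks_isUpperTriangular (ε : K) : (twoJordanBlocks ε).IsUpperTriangular :=
  ((blockTriangular_diagonal _).add (blockTriangular_single (by decide) _)).add
    (blockTriangular_single (by decide) _)

theorem twoJordanBlocks_eq_zero_of_vecMul_eq_smul {ε ν : K} (hε : ν ≠ ε) (h1 : ν ≠ 1)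
    (w : Fin 4 → K) (hw : w ᵥ* twoJordanBlocks ε = ν • w) : w = 0 := by
  by_contra hw0
  obtain ⟨i, hi⟩ := exists_diag_eq_of_vecMul_eq_smul (twoJordanBlocks_isUpperTriangular ε) hw0 hw
  fin_cases i <;> simp_all [twoJordanBlocks]

theorem isLeftJordanPair_twoJordanBlocks_zero_one (ε : K) :
    IsLeftJordanPair (twoJordanBlocks ε) ε (Pi.single 0 1) (Pi.single 1 1) := by
  constructor <;> ext j <;> fin_cases j <;> simp [twoJordanBlocks]

theorem isLeftJordanPair_twoJordanBlocks_two_three (ε : K) :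
    IsLeftJordanPair (twoJordanBlocks ε) 1 (Pi.single 2 1) (Pi.single 3 1) := by
  constructor <;> ext j <;> fin_cases j <;> simp [twoJordanBlocks]

end TwoJordanBlocks

/-- If `A` consists of two `2×2` Jordan blocks with eigenvalues `ε ∈ {q, q⁻¹}`
and `1`, then any `B, B'` with `AB = qBA`, `B'A = qAB'` and `BB' = qB'B`
satisfy `BB' = 0`. -/
theorem two_jordan_blocks_qcomm_product_zero
    (q : ℂ) (hq0 : q ≠ 0) (hq2 : q ^ 2 ≠ 1)
    (ε : ℂ) (hε : ε = q ∨ ε = q⁻¹)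
    (A B B' : Matrix (Fin 4) (Fin 4) ℂ)
    (hA : A = diagonal ![ε, ε, 1, 1] +
      single (0 : Fin 4) (1 : Fin 4) (1 : ℂ) +
      single (2 : Fin 4) (3 : Fin 4) (1 : ℂ))
    (hB : A * B = q • (B * A))
    (hB' : B' * A = q • (A * B'))
    (hBB' : B * B' = q • (B' * B)) :
    B * B' = 0 := by
  have hBA : B * A = q⁻¹ • (A * B) := by rw [hB, smul_smul, inv_mul_cancel₀ hq0, one_smul]
  change A = twoJordanBlocks ε at hA
  subst hA
  have hspec {ν : ℂ} (h₁ : ν ≠ ε) (h₂ : ν ≠ 1) := twoJordanBlocks_eq_zero_of_vecMul_eq_smul h₁ h₂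
  rcases hε with hε | hε <;> subst ε
  · obtain ⟨hB2, hB3⟩ := (isLeftJordanPair_twoJordanBlocks_two_three q).vecMul_eq_zero hBA
      (hspec (by field_simp; grind) (by field_simp; grind))
    obtain ⟨hB'0, hB'1⟩ := (isLeftJordanPair_twoJordanBlocks_zero_one q).vecMul_eq_zero hB'
      (hspec (by field_simp; grind) (by field_simp; grind))
    simp only [single_one_vecMul, row_def] at hB2 hB3 hB'0 hB'1
    refine mul_eq_zero_of_rows_eq_zero (fun i ↦ 2 ≤ i) (fun i hi ↦ ?_) (fun i hi ↦ ?_) hBB'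
      <;> fin_cases i <;> simp_all
  · obtain ⟨hB0, hB1⟩ := (isLeftJordanPair_twoJordanBlocks_zero_one q⁻¹).vecMul_eq_zero hBA
      (hspec (by field_simp; grind) (by field_simp; grind))
    obtain ⟨hB'2, hB'3⟩ := (isLeftJordanPair_twoJordanBlocks_two_three q⁻¹).vecMul_eq_zero hB'
      (hspec (by field_simp; grind) (by field_simp; grind))
    simp only [single_one_vecMul, row_def] at hB0 hB1 hB'2 hB'3
    refine mul_eq_zero_of_rows_eq_zero (fun i ↦ i < 2) (fun i hi ↦ ?_) (fun i hi ↦ ?_) hBB'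
      <;> fin_cases i <;> simp_all
end

section
/- Let q ∈ ℂ with q ≠ 0 and q^k ≠ 1 for k = 1,2,3,4. Let A be the 4×4 complex matrix A = diag(q, q, q, 1) + e₁₂ + e₂₃, i.e. a 3×3 simplest Jordan block with eigenvalue q together with the diagonal entry 1. Then {B ∈ M₄(ℂ) : AB = qBA} = ℂ·e₁₄ and {B' ∈ M₄(ℂ) : B'A = qAB'} = ℂ·e₄₃. Consequently the product of any element of the first space with any element of the second space, in at least one of the two orders, is zero (e₄₃·e₁₄ = 0). -/
/-!
Write `b_j` for the columns of `B`. Reading `A B = q B A` column by column gives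
`A b₀ = q² b₀`, `A b₁ = q² b₁ + q b₀`, `A b₂ = q² b₂ + q b₁` and `A b₃ = q b₃`. Since `q²` is
not an eigenvalue of `A`, the first three columns vanish in turn, and `b₃` lies in the
`q`-eigenspace of `A`, which is spanned by `e₁`.

The second space reduces to the first: transposing `B' A = q A B'` gives `Aᵀ B'ᵀ = q B'ᵀ Aᵀ`,
and `Aᵀ` is `A` conjugated by the transposition `(1 3)`, which reverses the Jordan block.
(Indices are 0-based below: `e₁` is `Pi.single 0 1` and `(1 3)` is `Equiv.swap 0 2`.)
-/

open Matrix

section QCommutation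

variable {n : Type*} [Fintype n] {R : Type*} [CommSemiring R]

theorem mul_eq_smul_mul_iff_transpose (q : R) (A B : Matrix n n R) :
    B * A = q • (A * B) ↔ Aᵀ * Bᵀ = q • (Bᵀ * Aᵀ) := by
  rw [← transpose_mul, ← transpose_mul, ← transpose_smul, transpose_inj]

theorem submatrix_mul_eq_smul_mul_iff {m : Type*} [Fintype m] (e : m ≃ n) (q : R)
    (A B : Matrix n n R) :
    A.submatrix e e * B.submatrix e e = q • (B.submatrix e e * A.submatrix e e) ↔
      A * B = q • (B * A) := by
  rw [submatrix_mul_equiv, submatrix_mul_equiv]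
  exact (reindex e.symm e.symm).injective.eq_iff (a := A * B) (b := q • (B * A))

end QCommutation

variable {K : Type*} [Field K]

def jordanPlusOne (q : K) : Matrix (Fin 4) (Fin 4) K :=
  !![q, 1, 0, 0; 0, q, 1, 0; 0, 0, q, 0; 0, 0, 0, 1]

theorem diagonal_add_single_eq_jordanPlusOne (q : K) :
    diagonal ![q, q, q, 1] + single 0 1 1 + single 1 2 1 = jordanPlusOne q := by
  ext i j
  fin_cases i <;> fin_cases j <;> simp [jordanPlusOne]

theorem jordanPlusOne_transpose (q : K) :
    (jordanPlusOne q)ᵀ = (jordanPlusOne q).submatrix (Equiv.swap 0 2) (Equiv.swap 0 2) := by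
  ext i j
  fin_cases i <;> fin_cases j <;> simp [jordanPlusOne, Equiv.swap_apply_def]

theorem jordanPlusOne_mulVec (q : K) (v : Fin 4 → K) :
    jordanPlusOne q *ᵥ v = ![q * v 0 + v 1, q * v 1 + v 2, q * v 2, v 3] := by
  ext i
  fin_cases i <;> simp [jordanPlusOne, mulVec, dotProduct, Fin.sum_univ_four]

theorem col_mul_jordanPlusOne (q : K) (B : Matrix (Fin 4) (Fin 4) K) :
    (B * jordanPlusOne q).col =
      ![q • B.col 0, B.col 0 + q • B.col 1, B.col 1 + q • B.col 2, B.col 3] := by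
  ext j i
  fin_cases j <;> simp [jordanPlusOne, mul_apply, Fin.sum_univ_four] <;> ring

theorem eq_zero_of_jordanPlusOne_mulVec_eq_smul {q μ : K} (hq : μ ≠ q) (h1 : μ ≠ 1)
    {v : Fin 4 → K} (h : jordanPlusOne q *ᵥ v = μ • v) : v = 0 := by
  rw [jordanPlusOne_mulVec] at h
  have e0 : q * v 0 + v 1 = μ * v 0 := congrFun h 0
  have e1 : q * v 1 + v 2 = μ * v 1 := congrFun h 1
  have e2 : q * v 2 = μ * v 2 := congrFun h 2
  have e3 : v 3 = μ * v 3 := congrFun h 3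
  have v3 : v 3 = 0 := mul_left_cancel₀ (sub_ne_zero.2 h1) (by linear_combination -e3)
  have v2 : v 2 = 0 := mul_left_cancel₀ (sub_ne_zero.2 hq) (by linear_combination -e2)
  have v1 : v 1 = 0 := mul_left_cancel₀ (sub_ne_zero.2 hq) (by linear_combination v2 - e1)
  have v0 : v 0 = 0 := mul_left_cancel₀ (sub_ne_zero.2 hq) (by linear_combination v1 - e0)
  ext i
  fin_cases i <;> assumption

theorem eq_single_of_jordanPlusOne_mulVec_eq_smul_self {q : K} (hq : q ≠ 1)
    {v : Fin 4 → K} (h : jordanPlusOne q *ᵥ v = q • v) : v = Pi.single 0 (v 0) := by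
  rw [jordanPlusOne_mulVec] at h
  have e0 : q * v 0 + v 1 = q * v 0 := congrFun h 0
  have e1 : q * v 1 + v 2 = q * v 1 := congrFun h 1
  have e3 : v 3 = q * v 3 := congrFun h 3
  have v3 : v 3 = 0 := mul_left_cancel₀ (sub_ne_zero.2 hq) (by linear_combination -e3)
  have v2 : v 2 = 0 := by linear_combination e1
  have v1 : v 1 = 0 := by linear_combination e0
  ext i
  fin_cases i <;> simp [v1, v2, v3]

theorem jordanPlusOne_mul_eq_smul_mul_iff {q : K} (hq0 : q ≠ 0) (hq1 : q ≠ 1) (hq2 : q ^ 2 ≠ 1)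
    (B : Matrix (Fin 4) (Fin 4) K) :
    jordanPlusOne q * B = q • (B * jordanPlusOne q) ↔ ∃ c : K, B = c • single 0 3 1 := by
  constructor
  · intro h
    have hcol (j : Fin 4) : jordanPlusOne q *ᵥ B.col j = q • (B * jordanPlusOne q).col j := by
      rw [← mulVec_single_one, ← mulVec_single_one, mulVec_mulVec, h, smul_mulVec]
    have hqq : q * q ≠ q := by simpa [mul_eq_right₀, hq0]
    have hqq1 : q * q ≠ 1 := by simpa [sq] using hq2
    have b0 : B.col 0 = 0 := eq_zero_of_jordanPlusOne_mulVec_eq_smul hqq hqq1 (by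
      simpa [col_mul_jordanPlusOne, smul_smul] using hcol 0)
    have b1 : B.col 1 = 0 := eq_zero_of_jordanPlusOne_mulVec_eq_smul hqq hqq1 (by
      simpa [col_mul_jordanPlusOne, smul_smul, b0] using hcol 1)
    have b2 : B.col 2 = 0 := eq_zero_of_jordanPlusOne_mulVec_eq_smul hqq hqq1 (by
      simpa [col_mul_jordanPlusOne, smul_smul, b1] using hcol 2)
    have b3 : B.col 3 = Pi.single 0 (B 0 3) :=
      eq_single_of_jordanPlusOne_mulVec_eq_smul_self hq1 (by
        simpa [col_mul_jordanPlusOne] using hcol 3)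
    refine ⟨B 0 3, ?_⟩
    ext i j
    fin_cases j
    · simpa using congrFun b0 i
    · simpa using congrFun b1 i
    · simpa using congrFun b2 i
    · simpa [Pi.single_apply, single_apply, eq_comm] using congrFun b3 i
  · rintro ⟨c, rfl⟩
    ext i j
    fin_cases i <;> fin_cases j <;> simp [jordanPlusOne, mul_apply, Fin.sum_univ_four]

theorem mul_jordanPlusOne_eq_smul_mul_iff {q : K} (hq0 : q ≠ 0) (hq1 : q ≠ 1) (hq2 : q ^ 2 ≠ 1)
    (B : Matrix (Fin 4) (Fin 4) K) :
    B * jordanPlusOne q = q • (jordanPlusOne q * B) ↔ ∃ c : K, B = c • single 3 2 1 := by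
  set σ : Fin 4 ≃ Fin 4 := Equiv.swap 0 2
  have hBσ : Bᵀ = (Bᵀ.submatrix σ σ).submatrix σ σ := by
    ext i j
    simp [σ, Equiv.swap_apply_self]
  rw [mul_eq_smul_mul_iff_transpose, jordanPlusOne_transpose, hBσ, submatrix_mul_eq_smul_mul_iff,
    jordanPlusOne_mul_eq_smul_mul_iff hq0 hq1 hq2]
  refine exists_congr fun c => ?_
  constructor
  · intro h
    rw [← transpose_transpose B, hBσ, h]
    simp [σ, Equiv.swap_apply_def]
  · rintro rfl
    simp [σ, Equiv.swap_apply_def]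

/-- For `A` a `3×3` simplest Jordan block with eigenvalue `q` together with the
diagonal entry `1`, the space `B(A)` is `ℂ·e₁₄`, the space `B'(A)` is `ℂ·e₄₃`,
and the product `B'·B` of any members of the two spaces vanishes. -/
theorem jordan3_qcomm_spaces
    (q : ℂ) (hq0 : q ≠ 0) (hq : ∀ k : ℕ, 1 ≤ k → k ≤ 4 → q ^ k ≠ 1)
    (A : Matrix (Fin 4) (Fin 4) ℂ)
    (hA : A = diagonal ![q, q, q, 1] +
      single (0 : Fin 4) (1 : Fin 4) (1 : ℂ) +
      single (1 : Fin 4) (2 : Fin 4) (1 : ℂ)) :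
    (∀ B : Matrix (Fin 4) (Fin 4) ℂ, A * B = q • (B * A) ↔
      ∃ c : ℂ, B = c • single (0 : Fin 4) (3 : Fin 4) (1 : ℂ)) ∧
    (∀ B' : Matrix (Fin 4) (Fin 4) ℂ, B' * A = q • (A * B') ↔
      ∃ c : ℂ, B' = c • single (3 : Fin 4) (2 : Fin 4) (1 : ℂ)) ∧
    (∀ B B' : Matrix (Fin 4) (Fin 4) ℂ,
      A * B = q • (B * A) → B' * A = q • (A * B') → B' * B = 0) := by
  rw [hA, diagonal_add_single_eq_jordanPlusOne]
  have hq1 : q ≠ 1 := by simpa using hq 1 le_rfl (by norm_num)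
  have hq2 : q ^ 2 ≠ 1 := hq 2 (by norm_num) (by norm_num)
  have hB := jordanPlusOne_mul_eq_smul_mul_iff hq0 hq1 hq2
  have hB' := mul_jordanPlusOne_eq_smul_mul_iff hq0 hq1 hq2
  refine ⟨hB, hB', fun B B' h h' => ?_⟩
  obtain ⟨c, rfl⟩ := (hB B).1 h
  obtain ⟨c', rfl⟩ := (hB' B').1 h'
  rw [smul_mul_smul_comm, single_mul_single_of_ne (j := 2) (k := 0) _ _ (by decide), smul_zero]
end

section
/- Let q ∈ ℂ with q^m ≠ 1 for every positive integer m. Let C₁₁, C₁₂, C₂₁, C₂₂ and C'₁₁, C'₁₂, C'₂₁, C'₂₂ be 4×4 complex matrices, each quadruple satisfying the Dipper–Donkin quantum GL₂ relations with invertible quantum determinant, and suppose the 2×2 block matrices M = (C_{ik}) and M' = (C'_{ik}) (8×8 complex matrices) are invertible, with inverse blocks C*_{kj} and C'*_{kj} respectively, so that Σ_k C_{ik}C*_{kj} = δ_{ij}·I and Σ_k C*_{ik}C_{kj} = δ_{ij}·I (and similarly for the primed matrices). Define the actions c_{ij}·v = Σ_k C_{ik} v C*_{kj} and c_{ij}*v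 = Σ_k C'_{ik} v C'*_{kj} on v ∈ M₄(ℂ). Then the following are equivalent: (i) there exists an invertible u ∈ M₄(ℂ) such that c_{ij}*(u v u⁻¹) = u·(c_{ij}·v)·u⁻¹ for all v ∈ M₄(ℂ) and all i,j ∈ {1,2}; (ii) there exist an invertible u ∈ M₄(ℂ) and nonzero complex numbers α₁, α₂ such that C'₁₁ = uC₁₁u⁻¹·α₁, C'₂₁ = uC₂₁u⁻¹·α₁, C'₁₂ = uC₁₂u⁻¹·α₂, and C'₂₂ = uC₂₂u⁻¹·α₂. Moreover, if such u can be taken to be the identity, the two actions coincide. -/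
/-!
Regard `C = (C i j)` as a `2 × 2` matrix over `M₄(ℂ)` with inverse `S`; the action of `c_ij` on `v`
is then the `(i, j)` entry of `C · diag(v, v) · S`. If conjugation by `u` intertwines the two
actions, then `D := u⁻¹ C' u` (entrywise) satisfies `D diag(v, v) D⁻¹ = C diag(v, v) C⁻¹` for all
`v`, so `S D` commutes with every `diag(v, v)`. Its entries are therefore central in `M₄(ℂ)`, i.e.
scalars, and `D = C g` for an invertible scalar matrix `g`. Expanding the Dipper–Donkin relations
of `D` through those of `C` leaves the defects `g₀ⱼ g₁ⱼ (q - 1)` and `g₀₁ g₁₀ (q - 1)` times the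
quantum determinant, which is invertible; since `q ≠ 1` and `det g ≠ 0`, `g` is diagonal.
Conversely, a scalar `g` commutes with every `diag(v, v)`, so it does not change the action.
-/

open Matrix

theorem Units.mul_conj_mul_eq_conj_iff {M : Type*} [Monoid M] (U : Mˣ) (X Y Z W : M) :
    X * (↑U * Y * ↑U⁻¹) * Z = ↑U * W * ↑U⁻¹ ↔ (↑U⁻¹ * X * ↑U) * Y * (↑U⁻¹ * Z * ↑U) = W := by
  constructor
  · intro h
    calc (↑U⁻¹ * X * ↑U) * Y * (↑U⁻¹ * Z * ↑U) = ↑U⁻¹ * (X * (↑U * Y * ↑U⁻¹) * Z) * ↑U := by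
          simp only [mul_assoc]
      _ = W := by rw [h]; simp only [mul_assoc, U.inv_mul_cancel_left, U.inv_mul, mul_one]
  · rintro rfl
    simp only [mul_assoc, U.mul_inv_cancel_left, U.mul_inv, mul_one]

namespace Matrix

variable {n R : Type*} [Fintype n] [DecidableEq n] [Ring R]

theorem mul_scalar_mul_apply (A B : Matrix n n R) (v : R) (i j : n) :
    (A * scalar n v * B) i j = ∑ k, A i k * v * B k j := by
  rw [mul_apply]
  simp [mul_diagonal]

theorem scalar_mul_mul_scalar_apply (u w : R) (X : Matrix n n R) (i j : n) :
    (scalar n u * X * scalar n w) i j = u * X i j * w := by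
  simp [mul_diagonal, diagonal_mul]

theorem of_mul_of_eq_one {A B : n → n → R}
    (h : ∀ i j, ∑ k, A i k * B k j = if i = j then 1 else 0) : of A * of B = 1 :=
  ext fun i j => by simpa [mul_apply, one_apply] using h i j

section ScalarConj

variable {C S D T : Matrix n n R}

theorem eq_mul_of_scalar_conj_eq (hTD : T * D = 1)
    (h : ∀ v, D * scalar n v * T = C * scalar n v * S) : D = C * (S * D) :=
  calc D = D * scalar n 1 * T * D := by rw [map_one, mul_one, mul_assoc, hTD, mul_one]
    _ = C * (S * D) := by rw [h, map_one, mul_one, mul_assoc]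

theorem commute_scalar_of_scalar_conj_eq (hSC : S * C = 1) (hTD : T * D = 1)
    (h : ∀ v, D * scalar n v * T = C * scalar n v * S) (v : R) :
    Commute (scalar n v) (S * D) :=
  calc scalar n v * (S * D) = S * (C * scalar n v * S) * D := by
        simp only [← mul_assoc, hSC, one_mul]
    _ = S * D * scalar n v := by rw [← h]; simp only [mul_assoc, hTD, mul_one]

theorem scalar_conj_eq_of_eq_mul (hCS : C * S = 1) (hTD : T * D = 1) {A : Matrix n n R}
    (hA : IsUnit A) (hAc : ∀ v, Commute (scalar n v) A) (hD : D = C * A) (v : R) :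
    D * scalar n v * T = C * scalar n v * S := by
  obtain ⟨A, rfl⟩ := hA
  have hT : T = (↑A⁻¹ : Matrix n n R) * S :=
    calc T = T * D * (↑A⁻¹ * S) := by
          rw [hD, mul_assoc T, mul_assoc C, A.mul_inv_cancel_left, hCS, mul_one]
      _ = ↑A⁻¹ * S := by rw [hTD, one_mul]
  rw [hT, hD, mul_assoc C, ← (hAc v).eq]
  simp only [mul_assoc, A.mul_inv_cancel_left]

end ScalarConj

section CentralAlgebra

variable {K : Type*}

theorem exists_eq_map_algebraMap_of_commute_scalar [CommSemiring K] [Algebra K R]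
    [Algebra.IsCentral K R] {G : Matrix n n R} (h : ∀ v, Commute (scalar n v) G) :
    ∃ g : Matrix n n K, G = g.map (algebraMap K R) := by
  have hG : ∀ i j, ∃ a, G i j = algebraMap K R a := fun i j =>
    (Algebra.IsCentral.mem_center_iff K).1 <| Subalgebra.mem_center_iff.2 fun v => by
      simpa using congrFun₂ (scalar_commute_iff.1 (h v)) i j
  choose g hg using hG
  exact ⟨of g, ext hg⟩

theorem commute_scalar_map_algebraMap [CommSemiring K] [Algebra K R] (g : Matrix n n K) (v : R) :
    Commute (scalar n v) (g.map (algebraMap K R)) :=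
  scalar_commute_iff.2 <| ext fun i j => by simp [Algebra.commutes]

variable [Field K] [Algebra K R] [Algebra.IsCentral K R] [Nontrivial R]

theorem scalar_conj_eq_iff {C S D T : Matrix n n R} (hSC : S * C = 1) (hCS : C * S = 1)
    (hTD : T * D = 1) :
    (∀ v, D * scalar n v * T = C * scalar n v * S) ↔
      ∃ g : Matrix n n K, IsUnit g ∧ D = C * g.map (algebraMap K R) := by
  constructor
  · intro h
    obtain ⟨g, hg⟩ := exists_eq_map_algebraMap_of_commute_scalar (K := K)
      (commute_scalar_of_scalar_conj_eq hSC hTD h)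
    obtain ⟨g', hg'⟩ := exists_eq_map_algebraMap_of_commute_scalar (K := K)
      (commute_scalar_of_scalar_conj_eq hTD hSC fun v => (h v).symm)
    have hgg' : (g * g').map (algebraMap K R) = (1 : Matrix n n K).map (algebraMap K R) := by
      rw [Matrix.map_mul, ← hg, ← hg', Matrix.map_one _ (map_zero _) (map_one _), mul_assoc,
        ← eq_mul_of_scalar_conj_eq hSC fun v => (h v).symm, hSC]
    refine ⟨g, IsUnit.of_mul_eq_one g' (map_injective (algebraMap K R).injective hgg'), ?_⟩
    rw [← hg]
    exact eq_mul_of_scalar_conj_eq hTD h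
  · rintro ⟨g, hg, rfl⟩
    exact scalar_conj_eq_of_eq_mul hCS hTD (hg.map (algebraMap K R).mapMatrix)
      (commute_scalar_map_algebraMap g) rfl

theorem conj_action_eq_iff {C S C' S' : Matrix n n R} (U : (Matrix n n R)ˣ) (hSC : S * C = 1)
    (hCS : C * S = 1) (hSC' : S' * C' = 1) :
    (∀ v : R, C' * (U * scalar n v * U⁻¹) * S' = U * (C * scalar n v * S) * U⁻¹) ↔
      ∃ g : Matrix n n K, IsUnit g ∧ C' = U * (C * g.map (algebraMap K R)) * U⁻¹ := by
  have hTD : (U⁻¹ * S' * U) * (U⁻¹ * C' * U : Matrix n n R) = 1 := by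
    simp only [mul_assoc, U.mul_inv_cancel_left, ← mul_assoc S', hSC', one_mul, U.inv_mul]
  simp only [U.mul_conj_mul_eq_conj_iff]
  rw [scalar_conj_eq_iff (K := K) hSC hCS hTD]
  refine exists_congr fun g => and_congr_right' ?_
  rw [Units.eq_mul_inv_iff_mul_eq, ← Units.inv_mul_eq_iff_eq_mul, mul_assoc]

theorem sum_conj_action_eq_iff {C S C' S' : Matrix n n R} (u : Rˣ) (hSC : S * C = 1)
    (hCS : C * S = 1) (hSC' : S' * C' = 1) :
    (∀ (v : R) (i j : n), ∑ k, C' i k * (↑u * v * ↑u⁻¹) * S' k j =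
        ↑u * (∑ k, C i k * v * S k j) * ↑u⁻¹) ↔
      ∃ g : Matrix n n K, IsUnit g ∧
        C' = scalar n (u : R) * (C * g.map (algebraMap K R)) * scalar n (↑u⁻¹ : R) := by
  have h := conj_action_eq_iff (K := K)
    (Units.map (scalar n : R →+* Matrix n n R).toMonoidHom u) hSC hCS hSC'
  simp only [Units.coe_map, Units.coe_map_inv, RingHom.toMonoidHom_eq_coe, MonoidHom.coe_coe] at h
  rw [← h]
  simp only [← Matrix.ext_iff, ← map_mul, mul_scalar_mul_apply, scalar_mul_mul_scalar_apply]

end CentralAlgebra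

end Matrix

namespace DipperDonkin

variable {K R : Type*} [Field K] [Ring R] [Algebra K R]

def quantumDet (C : Matrix (Fin 2) (Fin 2) R) : R := C 0 0 * C 1 1 - C 0 1 * C 1 0

variable {q : K} {C D : Matrix (Fin 2) (Fin 2) R} {g : Matrix (Fin 2) (Fin 2) K}

theorem mul_map_algebraMap_apply (C : Matrix (Fin 2) (Fin 2) R) (g : Matrix (Fin 2) (Fin 2) K)
    (i j : Fin 2) : (C * g.map (algebraMap K R)) i j = g 0 j • C i 0 + g 1 j • C i 1 := by
  simp [mul_apply, Fin.sum_univ_two, Algebra.smul_def, Algebra.commutes]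

theorem column_relation_defect (h2 : C 1 0 * C 0 0 = q • (C 0 0 * C 1 0))
    (h3 : C 1 1 * C 0 1 = q • (C 0 1 * C 1 1)) (h5 : C 1 0 * C 0 1 = q • (C 0 1 * C 1 0))
    (h6 : C 1 1 * C 0 0 - C 0 0 * C 1 1 = (q - 1) • (C 0 1 * C 1 0))
    (hD : D = C * g.map (algebraMap K R)) (j : Fin 2) :
    D 1 j * D 0 j - q • (D 0 j * D 1 j) = -(g 0 j * g 1 j * (q - 1)) • quantumDet C := by
  simp only [hD, mul_map_algebraMap_apply, quantumDet, add_mul, mul_add, smul_mul_assoc,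
    mul_smul_comm, smul_add, smul_smul, h2, h3, h5, eq_add_of_sub_eq h6]
  module

theorem cross_relation_defect (h2 : C 1 0 * C 0 0 = q • (C 0 0 * C 1 0))
    (h3 : C 1 1 * C 0 1 = q • (C 0 1 * C 1 1)) (h5 : C 1 0 * C 0 1 = q • (C 0 1 * C 1 0))
    (h6 : C 1 1 * C 0 0 - C 0 0 * C 1 1 = (q - 1) • (C 0 1 * C 1 0))
    (hD : D = C * g.map (algebraMap K R)) :
    D 1 1 * D 0 0 - D 0 0 * D 1 1 - (q - 1) • (D 0 1 * D 1 0) =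
      -(g 0 1 * g 1 0 * (q - 1)) • quantumDet C := by
  simp only [hD, mul_map_algebraMap_apply, quantumDet, add_mul, mul_add, smul_mul_assoc,
    mul_smul_comm, smul_add, smul_smul, h2, h3, h5, eq_add_of_sub_eq h6]
  module

theorem isDiag_of_relations_mul_map [Nontrivial R] (hq : q ≠ 1)
    (h2 : C 1 0 * C 0 0 = q • (C 0 0 * C 1 0)) (h3 : C 1 1 * C 0 1 = q • (C 0 1 * C 1 1))
    (h5 : C 1 0 * C 0 1 = q • (C 0 1 * C 1 0))
    (h6 : C 1 1 * C 0 0 - C 0 0 * C 1 1 = (q - 1) • (C 0 1 * C 1 0))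
    (hdet : IsUnit (quantumDet C)) (hg : IsUnit g) (hD : D = C * g.map (algebraMap K R))
    (hD2 : D 1 0 * D 0 0 = q • (D 0 0 * D 1 0)) (hD3 : D 1 1 * D 0 1 = q • (D 0 1 * D 1 1))
    (hD6 : D 1 1 * D 0 0 - D 0 0 * D 1 1 = (q - 1) • (D 0 1 * D 1 0)) :
    g.IsDiag := by
  have eq_zero_of_defect : ∀ r : K, -(r * (q - 1)) • quantumDet C = 0 → r = 0 := fun r hr => by
    simpa [sub_eq_zero, hq] using (smul_eq_zero.1 hr).resolve_right hdet.ne_zero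
  have h00 : g 0 0 * g 1 0 = 0 := eq_zero_of_defect _ <| by
    rw [← column_relation_defect h2 h3 h5 h6 hD 0, hD2, sub_self]
  have h11 : g 0 1 * g 1 1 = 0 := eq_zero_of_defect _ <| by
    rw [← column_relation_defect h2 h3 h5 h6 hD 1, hD3, sub_self]
  have h01 : g 0 1 * g 1 0 = 0 := eq_zero_of_defect _ <| by
    rw [← cross_relation_defect h2 h3 h5 h6 hD, hD6, sub_self]
  have hdiag : g 0 0 * g 1 1 ≠ 0 := by
    simpa [det_fin_two, h01] using ((isUnit_iff_isUnit_det g).1 hg).ne_zero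
  have h10 : g 1 0 = 0 := (mul_eq_zero.1 h00).resolve_left (left_ne_zero_of_mul hdiag)
  have h01' : g 0 1 = 0 := (mul_eq_zero.1 h11).resolve_right (right_ne_zero_of_mul hdiag)
  intro i j hij
  fin_cases i <;> fin_cases j <;> first | contradiction | assumption

theorem conj_mul_map_diagonal_apply (u : Rˣ) (α : Fin 2 → K) (i j : Fin 2) :
    (scalar (Fin 2) (u : R) * (C * (diagonal α).map (algebraMap K R)) *
        scalar (Fin 2) (↑u⁻¹ : R)) i j = α j • (↑u * C i j * ↑u⁻¹) := by
  rw [scalar_mul_mul_scalar_apply, diagonal_map (map_zero _), mul_diagonal, ← Algebra.commutes,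
    ← Algebra.smul_def, mul_smul_comm, smul_mul_assoc]

theorem exists_eq_conj_mul_map_iff [Nontrivial R] (u : Rˣ) {C' : Matrix (Fin 2) (Fin 2) R}
    (hq : q ≠ 1) (h2 : C 1 0 * C 0 0 = q • (C 0 0 * C 1 0))
    (h3 : C 1 1 * C 0 1 = q • (C 0 1 * C 1 1)) (h5 : C 1 0 * C 0 1 = q • (C 0 1 * C 1 0))
    (h6 : C 1 1 * C 0 0 - C 0 0 * C 1 1 = (q - 1) • (C 0 1 * C 1 0))
    (hdet : IsUnit (quantumDet C)) (h2' : C' 1 0 * C' 0 0 = q • (C' 0 0 * C' 1 0))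
    (h3' : C' 1 1 * C' 0 1 = q • (C' 0 1 * C' 1 1))
    (h6' : C' 1 1 * C' 0 0 - C' 0 0 * C' 1 1 = (q - 1) • (C' 0 1 * C' 1 0)) :
    (∃ g : Matrix (Fin 2) (Fin 2) K, IsUnit g ∧
        C' = scalar (Fin 2) (u : R) * (C * g.map (algebraMap K R)) * scalar (Fin 2) (↑u⁻¹ : R)) ↔
      ∃ α : Fin 2 → K, (∀ j, α j ≠ 0) ∧ ∀ i j, C' i j = α j • (↑u * C i j * ↑u⁻¹) := by
  constructor
  · rintro ⟨g, hg, hC'⟩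
    let φ := MulSemiringAction.toAlgEquiv K R (ConjAct.toConjAct u⁻¹)
    have hφ : ∀ i j, φ (C' i j) = (C * g.map (algebraMap K R)) i j := fun i j => by
      rw [hC', scalar_mul_mul_scalar_apply]
      simp only [φ, MulSemiringAction.toAlgEquiv_apply, ConjAct.units_smul_def,
        ConjAct.ofConjAct_toConjAct, inv_inv, mul_assoc, Units.inv_mul_cancel_left, Units.inv_mul,
        mul_one]
    have hdiag := isDiag_of_relations_mul_map hq h2 h3 h5 h6 hdet hg rfl
      (by simpa only [map_mul, map_smul, hφ] using congrArg φ h2')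
      (by simpa only [map_mul, map_smul, hφ] using congrArg φ h3')
      (by simpa only [map_mul, map_smul, map_sub, hφ] using congrArg φ h6')
    rw [← hdiag.diagonal_diag] at hg hC'
    refine ⟨g.diag, fun j => (Pi.isUnit_iff.1 (isUnit_diagonal.1 hg) j).ne_zero, fun i j => ?_⟩
    rw [hC', conj_mul_map_diagonal_apply]
  · rintro ⟨α, hα, hC'⟩
    refine ⟨diagonal α, isUnit_diagonal.2 (Pi.isUnit_iff.2 fun j => (hα j).isUnit), ?_⟩
    ext i j
    rw [hC', conj_mul_map_diagonal_apply]

end DipperDonkin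

theorem dipper_donkin_actions_equivalence_general
    (q : ℂ) (hq : ∀ m : ℕ, 0 < m → q ^ m ≠ 1)
    (C C' S S' : Fin 2 → Fin 2 → Matrix (Fin 4) (Fin 4) ℂ)
    -- Dipper–Donkin relations for the representation `c_ij ↦ C i j`
    (h2 : C 1 0 * C 0 0 = q • (C 0 0 * C 1 0))
    (h3 : C 1 1 * C 0 1 = q • (C 0 1 * C 1 1))
    (h5 : C 1 0 * C 0 1 = q • (C 0 1 * C 1 0))
    (h6 : C 1 1 * C 0 0 - C 0 0 * C 1 1 = (q - 1) • (C 0 1 * C 1 0))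
    (hdet : IsUnit (C 0 0 * C 1 1 - C 0 1 * C 1 0))
    -- Dipper–Donkin relations for the representation `c_ij ↦ C' i j`
    (h2' : C' 1 0 * C' 0 0 = q • (C' 0 0 * C' 1 0))
    (h3' : C' 1 1 * C' 0 1 = q • (C' 0 1 * C' 1 1))
    (h6' : C' 1 1 * C' 0 0 - C' 0 0 * C' 1 1 = (q - 1) • (C' 0 1 * C' 1 0))
    -- `S` is the two-sided blockwise inverse of the block matrix `(C i j)`
    (hS1 : ∀ i j : Fin 2, ∑ k : Fin 2, C i k * S k j =
      if i = j then (1 : Matrix (Fin 4) (Fin 4) ℂ) else 0)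
    (hS2 : ∀ i j : Fin 2, ∑ k : Fin 2, S i k * C k j =
      if i = j then (1 : Matrix (Fin 4) (Fin 4) ℂ) else 0)
    -- `S'` is the two-sided blockwise inverse of the block matrix `(C' i j)`
    (hS2' : ∀ i j : Fin 2, ∑ k : Fin 2, S' i k * C' k j =
      if i = j then (1 : Matrix (Fin 4) (Fin 4) ℂ) else 0) :
    -- the two actions are equivalent iff the representations differ by
    -- conjugation and columnwise nonzero scalars
    ((∃ u : Matrix (Fin 4) (Fin 4) ℂ, IsUnit u ∧
        ∀ (v : Matrix (Fin 4) (Fin 4) ℂ) (i j : Fin 2),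
          ∑ k : Fin 2, C' i k * (u * v * u⁻¹) * S' k j =
            u * (∑ k : Fin 2, C i k * v * S k j) * u⁻¹) ↔
      (∃ (u : Matrix (Fin 4) (Fin 4) ℂ) (α : Fin 2 → ℂ), IsUnit u ∧
        (∀ j : Fin 2, α j ≠ 0) ∧
        ∀ i j : Fin 2, C' i j = α j • (u * C i j * u⁻¹))) ∧
    -- moreover, if `u` can be taken to be the identity, the actions coincide
    ((∃ α : Fin 2 → ℂ, (∀ j : Fin 2, α j ≠ 0) ∧
        ∀ i j : Fin 2, C' i j = α j • C i j) →
      ∀ (v : Matrix (Fin 4) (Fin 4) ℂ) (i j : Fin 2),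
        ∑ k : Fin 2, C' i k * v * S' k j = ∑ k : Fin 2, C i k * v * S k j) := by
  have key (u : (Matrix (Fin 4) (Fin 4) ℂ)ˣ) :=
    (sum_conj_action_eq_iff (C' := of C') u (of_mul_of_eq_one hS2) (of_mul_of_eq_one hS1)
      (of_mul_of_eq_one hS2')).trans
    (DipperDonkin.exists_eq_conj_mul_map_iff u (by simpa using hq 1 one_pos)
      h2 h3 h5 h6 hdet h2' h3' h6')
  simp only [of_apply, coe_units_inv] at key
  refine ⟨⟨?_, ?_⟩, ?_⟩
  · rintro ⟨_, ⟨u, rfl⟩, hact⟩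
    obtain ⟨α, hα, hC'⟩ := (key u).1 hact
    exact ⟨u, α, u.isUnit, hα, hC'⟩
  · rintro ⟨_, α, ⟨u, rfl⟩, hα, hC'⟩
    exact ⟨u, u.isUnit, (key u).2 ⟨α, hα, hC'⟩⟩
  · rintro ⟨α, hα, hC'⟩
    simpa using (key 1).2 ⟨α, hα, by simpa using hC'⟩

/-- Two inner Hopf-algebra actions `c_ij · v = Σₖ C i k * v * S k j` and
`c_ij * v = Σₖ C' i k * v * S' k j` of the Dipper–Donkin quantum `GL₂` on
`M₄(ℂ)`, arising from two representations `c_ij ↦ C i j` and `c_ij ↦ C' i j`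
(with `S`, `S'` the blocks of the inverses of the `8×8` block matrices
`(C i j)`, `(C' i j)`), are equivalent iff `C' i j = αⱼ • (u * C i j * u⁻¹)`
for some invertible `u` and nonzero scalars `α₁, α₂`.  Moreover, if `u` can be
taken to be the identity, the two actions coincide. -/
theorem dipper_donkin_actions_equivalence
    (q : ℂ) (hq : ∀ m : ℕ, 0 < m → q ^ m ≠ 1)
    (C C' S S' : Fin 2 → Fin 2 → Matrix (Fin 4) (Fin 4) ℂ)
    -- Dipper–Donkin relations for the representation `c_ij ↦ C i j`
    (h1 : C 0 0 * C 0 1 = C 0 1 * C 0 0)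
    (h2 : C 1 0 * C 0 0 = q • (C 0 0 * C 1 0))
    (h3 : C 1 1 * C 0 1 = q • (C 0 1 * C 1 1))
    (h4 : C 1 0 * C 1 1 = C 1 1 * C 1 0)
    (h5 : C 1 0 * C 0 1 = q • (C 0 1 * C 1 0))
    (h6 : C 1 1 * C 0 0 - C 0 0 * C 1 1 = (q - 1) • (C 0 1 * C 1 0))
    (hdet : IsUnit (C 0 0 * C 1 1 - C 0 1 * C 1 0))
    -- Dipper–Donkin relations for the representation `c_ij ↦ C' i j`
    (h1' : C' 0 0 * C' 0 1 = C' 0 1 * C' 0 0)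
    (h2' : C' 1 0 * C' 0 0 = q • (C' 0 0 * C' 1 0))
    (h3' : C' 1 1 * C' 0 1 = q • (C' 0 1 * C' 1 1))
    (h4' : C' 1 0 * C' 1 1 = C' 1 1 * C' 1 0)
    (h5' : C' 1 0 * C' 0 1 = q • (C' 0 1 * C' 1 0))
    (h6' : C' 1 1 * C' 0 0 - C' 0 0 * C' 1 1 = (q - 1) • (C' 0 1 * C' 1 0))
    (hdet' : IsUnit (C' 0 0 * C' 1 1 - C' 0 1 * C' 1 0))
    -- `S` is the two-sided blockwise inverse of the block matrix `(C i j)`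
    (hS1 : ∀ i j : Fin 2, ∑ k : Fin 2, C i k * S k j =
      if i = j then (1 : Matrix (Fin 4) (Fin 4) ℂ) else 0)
    (hS2 : ∀ i j : Fin 2, ∑ k : Fin 2, S i k * C k j =
      if i = j then (1 : Matrix (Fin 4) (Fin 4) ℂ) else 0)
    -- `S'` is the two-sided blockwise inverse of the block matrix `(C' i j)`
    (hS1' : ∀ i j : Fin 2, ∑ k : Fin 2, C' i k * S' k j =
      if i = j then (1 : Matrix (Fin 4) (Fin 4) ℂ) else 0)
    (hS2' : ∀ i j : Fin 2, ∑ k : Fin 2, S' i k * C' k j =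
      if i = j then (1 : Matrix (Fin 4) (Fin 4) ℂ) else 0) :
    -- the two actions are equivalent iff the representations differ by
    -- conjugation and columnwise nonzero scalars
    ((∃ u : Matrix (Fin 4) (Fin 4) ℂ, IsUnit u ∧
        ∀ (v : Matrix (Fin 4) (Fin 4) ℂ) (i j : Fin 2),
          ∑ k : Fin 2, C' i k * (u * v * u⁻¹) * S' k j =
            u * (∑ k : Fin 2, C i k * v * S k j) * u⁻¹) ↔
      (∃ (u : Matrix (Fin 4) (Fin 4) ℂ) (α : Fin 2 → ℂ), IsUnit u ∧
        (∀ j : Fin 2, α j ≠ 0) ∧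
        ∀ i j : Fin 2, C' i j = α j • (u * C i j * u⁻¹))) ∧
    -- moreover, if `u` can be taken to be the identity, the actions coincide
    ((∃ α : Fin 2 → ℂ, (∀ j : Fin 2, α j ≠ 0) ∧
        ∀ i j : Fin 2, C' i j = α j • C i j) →
      ∀ (v : Matrix (Fin 4) (Fin 4) ℂ) (i j : Fin 2),
        ∑ k : Fin 2, C' i k * v * S' k j = ∑ k : Fin 2, C i k * v * S k j) :=
  dipper_donkin_actions_equivalence_general q hq C C' S S' h2 h3 h5 h6 hdet h2' h3' h6' hS1 hS2 hS2'
end
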